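/- Let ρ > 0 and ν ∈ ℝ with cos(πν) ≠ 0, and let g₀(r) = −(√(r² + ρ²)/(4π cos(πν) r ρ)) · sin((ν + 1/2) · arccos((r² − ρ²)/(r² + ρ²))). Then r · g₀(r) tends to −1/(4π) as r → 0⁺, and r · g₀(r) tends to −(2ν + 1)/(4π cos(πν)) as r → ∞. -/

import Mathlib

/-!
With `t = ρ / r` one has `arccos ((r² - ρ²) / (r² + ρ²)) = 2 arctan t`, so that
`r g₀(r) = -√(1 + t²) sin ((2ν + 1) arctan t) / (4π cos (πν) t)`.
As `r → ∞`, `t → 0` and `sin ((2ν + 1) arctan t) / t → 2ν + 1`, the derivative at `0`.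
As `r → 0⁺`, `t → ∞`, `√(1 + t²) / t → 1` and `arctan t → π / 2`, where
`sin ((2ν + 1) π / 2) = cos (πν)` cancels against the denominator.
-/

open Real Filter Topology

namespace Real

theorem arccos_one_sub_sq_div_one_add_sq {t : ℝ} (ht : 0 ≤ t) :
    arccos ((1 - t ^ 2) / (1 + t ^ 2)) = 2 * arctan t := by
  have hcos : cos (2 * arctan t) = (1 - t ^ 2) / (1 + t ^ 2) := by
    rw [cos_two_mul, cos_sq_arctan]
    field_simp
    ring
  rw [← hcos, arccos_cos (by linarith [arctan_nonneg.mpr ht])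
    (by linarith [arctan_lt_pi_div_two t])]

theorem tendsto_sin_mul_arctan_div_self (a : ℝ) :
    Tendsto (fun t => sin (a * arctan t) / t) (𝓝[≠] 0) (𝓝 a) := by
  have hderiv : HasDerivAt (fun t => sin (a * arctan t)) a 0 := by
    simpa [arctan_zero] using ((hasDerivAt_arctan 0).const_mul a).sin
  simpa [slope_fun_def_field, arctan_zero] using hasDerivAt_iff_tendsto_slope.mp hderiv

theorem tendsto_sqrt_one_add_sq_div_self_atTop :
    Tendsto (fun t => √(1 + t ^ 2) / t) atTop (𝓝 1) := by
  have hlim : Tendsto (fun t : ℝ => √((t ^ 2)⁻¹ + 1)) atTop (𝓝 1) := by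
    simpa using ((tendsto_inv_atTop_zero.comp (tendsto_pow_atTop two_ne_zero)).add_const
      (1 : ℝ)).sqrt
  refine hlim.congr' ?_
  filter_upwards [eventually_gt_atTop 0] with t ht
  rw [show (t ^ 2)⁻¹ + 1 = (1 + t ^ 2) / t ^ 2 by field_simp, sqrt_div' _ (sq_nonneg t),
    sqrt_sq ht.le]

end Real

section ConstDiv

variable {𝕜 : Type*} [Field 𝕜] [LinearOrder 𝕜] [IsStrictOrderedRing 𝕜] [TopologicalSpace 𝕜]
  [OrderTopology 𝕜] {c : 𝕜}

theorem tendsto_const_div_atTop_nhdsGT_zero (hc : 0 < c) :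
    Tendsto (fun x => c / x) atTop (𝓝[>] 0) :=
  tendsto_nhdsWithin_iff.mpr ⟨tendsto_const_nhds.div_atTop tendsto_id,
    (eventually_gt_atTop 0).mono fun _ hx => div_pos hc hx⟩

theorem tendsto_const_div_nhdsGT_zero_atTop (hc : 0 < c) :
    Tendsto (fun x => c / x) (𝓝[>] 0) atTop := by
  simpa only [div_eq_mul_inv] using tendsto_inv_nhdsGT_zero.const_mul_atTop hc

end ConstDiv

noncomputable def fishEyeGreen (ρ ν r : ℝ) : ℝ :=
  -(√(r ^ 2 + ρ ^ 2) / (4 * π * cos (π * ν) * r * ρ)) *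
    sin ((ν + 1 / 2) * arccos ((r ^ 2 - ρ ^ 2) / (r ^ 2 + ρ ^ 2)))

noncomputable def fishEyeProfile (ν t : ℝ) : ℝ :=
  -(√(1 + t ^ 2) * sin ((2 * ν + 1) * arctan t)) / (4 * π * cos (π * ν) * t)

theorem mul_fishEyeGreen_eq {ρ r : ℝ} (ν : ℝ) (hρ : 0 < ρ) (hr : 0 < r) :
    r * fishEyeGreen ρ ν r = fishEyeProfile ν (ρ / r) := by
  have hratio : (r ^ 2 - ρ ^ 2) / (r ^ 2 + ρ ^ 2) = (1 - (ρ / r) ^ 2) / (1 + (ρ / r) ^ 2) := by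
    field_simp
  have hsqrt : √(r ^ 2 + ρ ^ 2) = r * √(1 + (ρ / r) ^ 2) := by
    rw [show r ^ 2 + ρ ^ 2 = r ^ 2 * (1 + (ρ / r) ^ 2) by field_simp, sqrt_mul (sq_nonneg r),
      sqrt_sq hr.le]
  rw [fishEyeGreen, fishEyeProfile, hratio, arccos_one_sub_sq_div_one_add_sq (by positivity),
    hsqrt]
  field_simp

theorem tendsto_fishEyeProfile_nhdsNE_zero (ν : ℝ) :
    Tendsto (fishEyeProfile ν) (𝓝[≠] 0) (𝓝 (-(2 * ν + 1) / (4 * π * cos (π * ν)))) := by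
  have hsqrt : Tendsto (fun t : ℝ => √(1 + t ^ 2)) (𝓝[≠] 0) (𝓝 1) :=
    ((continuous_const.add (continuous_pow 2)).sqrt.tendsto' 0 1 (by simp)).mono_left
      nhdsWithin_le_nhds
  have hlim := ((hsqrt.mul (tendsto_sin_mul_arctan_div_self (2 * ν + 1))).neg).div_const
    (4 * π * cos (π * ν))
  rw [one_mul] at hlim
  convert hlim using 1
  ext t
  rw [fishEyeProfile]
  ring

theorem tendsto_fishEyeProfile_atTop {ν : ℝ} (hν : cos (π * ν) ≠ 0) :
    Tendsto (fishEyeProfile ν) atTop (𝓝 (-1 / (4 * π))) := by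
  have hsin : Tendsto (fun t => sin ((2 * ν + 1) * arctan t)) atTop (𝓝 (cos (π * ν))) := by
    have h := (continuous_sin.tendsto _).comp
      ((tendsto_arctan_atTop.mono_right nhdsWithin_le_nhds).const_mul (2 * ν + 1))
    rwa [show (2 * ν + 1) * (π / 2) = π * ν + π / 2 by ring, sin_add_pi_div_two] at h
  have hlim := ((tendsto_sqrt_one_add_sq_div_self_atTop.mul hsin).neg).div_const
    (4 * π * cos (π * ν))
  rw [one_mul] at hlim
  convert hlim.congr' ?_ using 2
  · field_simp
  filter_upwards [eventually_ne_atTop 0] with t ht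
  rw [fishEyeProfile]
  field_simp

theorem central_green_boundary_behaviour
    (ρ ν : ℝ) (hρ : 0 < ρ) (hν : Real.cos (Real.pi * ν) ≠ 0)
    (g₀ : ℝ → ℝ)
    (hg₀ : g₀ = fun r =>
      -(Real.sqrt (r ^ 2 + ρ ^ 2) / (4 * Real.pi * Real.cos (Real.pi * ν) * r * ρ))
        * Real.sin ((ν + 1 / 2) * Real.arccos ((r ^ 2 - ρ ^ 2) / (r ^ 2 + ρ ^ 2)))) :
    Filter.Tendsto (fun r => r * g₀ r) (nhdsWithin 0 (Set.Ioi (0 : ℝ)))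
        (nhds (-1 / (4 * Real.pi))) ∧
      Filter.Tendsto (fun r => r * g₀ r) Filter.atTop
        (nhds (-(2 * ν + 1) / (4 * Real.pi * Real.cos (Real.pi * ν)))) := by
  subst hg₀
  have hnear : ∀ᶠ r in 𝓝[>] 0, fishEyeProfile ν (ρ / r) = r * fishEyeGreen ρ ν r :=
    eventually_nhdsWithin_of_forall fun _ hr => (mul_fishEyeGreen_eq ν hρ hr).symm
  have hfar : ∀ᶠ r in atTop, fishEyeProfile ν (ρ / r) = r * fishEyeGreen ρ ν r :=
    (eventually_gt_atTop 0).mono fun _ hr => (mul_fishEyeGreen_eq ν hρ hr).symm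
  have hratio : Tendsto (fun r => ρ / r) atTop (𝓝[≠] 0) :=
    (tendsto_const_div_atTop_nhdsGT_zero hρ).mono_right
      (nhdsWithin_mono _ fun _ hr => ne_of_gt hr)
  exact ⟨((tendsto_fishEyeProfile_atTop hν).comp (tendsto_const_div_nhdsGT_zero_atTop hρ)).congr'
      hnear, ((tendsto_fishEyeProfile_nhdsNE_zero ν).comp hratio).congr' hfar⟩
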